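/- If the model fits the unprotected normal subgroup and the unprotected anomaly subgroup (L_U = L_1^UN + L_0^UA, L_P = L_1^PN + L_0^PA), then the weight ε = (L_0^U - L_U)/((L_0^U - L_U) + (L_0^P - L_P)), where L_0^U = L_0^UN + L_0^UA and L_0^P = L_0^PN + L_0^PA, equals Δ^UN/(Δ^UN + Δ^PN), and this value lies strictly between Δ^UA/(Δ^UA + Δ^PN) and Δ^UN/(Δ^UN + Δ^PA). -/

import Mathlib

/-! The loss reductions entering `ε` are exactly `Δ^UN` on the unprotected group and `Δ^PN` on the
protected one, so `ε = Δ^UN / (Δ^UN + Δ^PN)`. The bounds follow because `a / (a + b)` is strictly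
increasing in `a` and strictly decreasing in `b` for positive `a, b`. -/

section

variable {K : Type*} [Field K] [LinearOrder K] [IsStrictOrderedRing K]

theorem div_add_lt_div_add_of_lt_left {a a' b : K} (ha : 0 < a) (hb : 0 < b) (h : a < a') :
    a / (a + b) < a' / (a' + b) := by
  rw [div_lt_div_iff₀ (by positivity) (by linarith)]
  nlinarith

theorem div_add_lt_div_add_of_lt_right {a b b' : K} (ha : 0 < a) (hb : 0 < b) (h : b < b') :
    a / (a + b') < a / (a + b) :=
  div_lt_div_of_pos_left ha (by positivity) (by linarith)

end

theorem epsilon_design_in_range_general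
    (L0UN L1UN L0PN L1PN L0UA L0PA : ℝ)
    (ΔUN ΔPN ΔUA ΔPA : ℝ)
    (hΔUN : ΔUN = L0UN - L1UN) (hΔPN : ΔPN = L0PN - L1PN)
    (hUN : 0 < ΔUN) (hPN : 0 < ΔPN) (hUA : 0 < ΔUA) (hPA : 0 < ΔPA)
    (h1 : ΔUN > ΔUA) (h2 : ΔPN > ΔPA)
    (LU LP L0U L0P ε : ℝ)
    (hLU : LU = L1UN + L0UA) (hLP : LP = L1PN + L0PA)
    (hL0U : L0U = L0UN + L0UA) (hL0P : L0P = L0PN + L0PA)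
    (hε : ε = (L0U - LU) / ((L0U - LU) + (L0P - LP))) :
    ε = ΔUN / (ΔUN + ΔPN) ∧
    ΔUA / (ΔUA + ΔPN) < ε ∧ ε < ΔUN / (ΔUN + ΔPA) := by
  have gain_U : L0U - LU = ΔUN := by linarith
  have gain_P : L0P - LP = ΔPN := by linarith
  have hε' : ε = ΔUN / (ΔUN + ΔPN) := by rw [hε, gain_U, gain_P]
  refine ⟨hε', ?_, ?_⟩
  · rw [hε']
    exact div_add_lt_div_add_of_lt_left hUA hPN h1
  · rw [hε']
    exact div_add_lt_div_add_of_lt_right hUN hPA h2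

theorem epsilon_design_in_range
    (L0UN L1UN L0PN L1PN L0UA L1UA L0PA L1PA : ℝ)
    (ΔUN ΔPN ΔUA ΔPA : ℝ)
    (hΔUN : ΔUN = L0UN - L1UN) (hΔPN : ΔPN = L0PN - L1PN)
    (hΔUA : ΔUA = L0UA - L1UA) (hΔPA : ΔPA = L0PA - L1PA)
    (hUN : 0 < ΔUN) (hPN : 0 < ΔPN) (hUA : 0 < ΔUA) (hPA : 0 < ΔPA)
    (h1 : ΔUN > ΔUA) (h2 : ΔPN > ΔPA)
    (LU LP L0U L0P ε : ℝ)
    (hLU : LU = L1UN + L0UA) (hLP : LP = L1PN + L0PA)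
    (hL0U : L0U = L0UN + L0UA) (hL0P : L0P = L0PN + L0PA)
    (hε : ε = (L0U - LU) / ((L0U - LU) + (L0P - LP))) :
    ε = ΔUN / (ΔUN + ΔPN) ∧
    ΔUA / (ΔUA + ΔPN) < ε ∧ ε < ΔUN / (ΔUN + ΔPA) :=
  epsilon_design_in_range_general L0UN L1UN L0PN L1PN L0UA L0PA ΔUN ΔPN ΔUA ΔPA hΔUN hΔPN hUN hPN
    hUA hPA h1 h2 LU LP L0U L0P ε hLU hLP hL0U hL0P hε
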